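/- Let A : f = 0 be an arrangement of d > 1 distinct lines in ℙ², not all passing through one point, and let m(A) ≥ 2 denote the maximal number of lines of A passing through a single point. Then mdr(f) ≤ d − m(A) ≤ d − 2. In particular, there is no line arrangement of d > 1 lines which is a maximal Tjurina curve of type (d, d−1). -/

import Mathlib

open MvPolynomial

noncomputable section

/-- The polynomial ring `S = ℂ[x,y,z]`. -/
abbrev S : Type := MvPolynomial (Fin 3) ℂ

/-- The linear map `(a,b,c) ↦ a fₓ + b f_y + c f_z`. -/
noncomputable def jacMap (f : S) : (Fin 3 → S) →ₗ[S] S :=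
  Fintype.linearCombination S (fun i => pderiv i f)

/-- The module `AR(f)` of Jacobian syzygies of `f`. -/
def AR (f : S) : Submodule S (Fin 3 → S) := LinearMap.ker (jacMap f)

/-- The Jacobian ideal `J_f = (fₓ, f_y, f_z)`. -/
def jacobianIdeal (f : S) : Ideal S := Ideal.span (Set.range fun i : Fin 3 => pderiv i f)

/-- `dim_ℂ M(f)_k`, the dimension of the degree-`k` piece of the Milnor algebra `S/J_f`,
computed as `dim (S_k / (J_f ∩ S_k))`. -/
noncomputable def milnorDim (f : S) (k : ℕ) : ℕ :=
  Module.finrank ℂ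
    (↥(homogeneousSubmodule (Fin 3) ℂ k) ⧸
      (Submodule.comap (homogeneousSubmodule (Fin 3) ℂ k).subtype
        (Submodule.restrictScalars ℂ (jacobianIdeal f))))

/-- `mdr(f)`: the minimal degree of a nonzero homogeneous Jacobian syzygy. -/
noncomputable def mdr (f : S) : ℕ :=
  sInf {k | ∃ a : Fin 3 → S, a ∈ AR f ∧ a ≠ 0 ∧ ∀ i, (a i).IsHomogeneous k}

/-- `g` is a homogeneous generating family of `AR(f)` with degrees `D`. -/
def HomGen (f : S) {m : ℕ} (g : Fin m → (Fin 3 → S)) (D : Fin m → ℕ) : Prop :=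
  (∀ j, g j ∈ AR f) ∧ (∀ j i, ((g j) i).IsHomogeneous (D j)) ∧
    Submodule.span S (Set.range g) = AR f

/-- `C : f = 0` is an `m`-syzygy curve with exponents `D`. -/
def IsMSyzygy (f : S) (m : ℕ) (D : Fin m → ℕ) : Prop :=
  (∃ g, HomGen f g D) ∧
    ∀ (m' : ℕ) (g' : Fin m' → (Fin 3 → S)) (D' : Fin m' → ℕ), HomGen f g' D' → m ≤ m'

/-- du Plessis–Wall bound `τ(d,r)_max` for `d/2 ≤ r ≤ d-1`. -/
def tauMax (d r : ℤ) : ℤ := (d-1)*(d-r-1) + r^2 - (2*r-d+2)*(2*r-d+1)/2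

/-- `p` is a singular point of the curve `f = 0`. -/
def IsSingAt (f : S) (p : Fin 3 → ℂ) : Prop := ∀ i, eval p (pderiv i f) = 0

/-- `p` is an ordinary node: a singular point where the Hessian matrix has rank 2,
i.e. the quadratic part of a local affine equation is nondegenerate. -/
def IsNodeAt (f : S) (p : Fin 3 → ℂ) : Prop :=
  IsSingAt f p ∧ (Matrix.of fun i j : Fin 3 => eval p (pderiv i (pderiv j f))).rank = 2

/-- The singular locus of `f = 0` as a set of points of `ℙ²`. -/
def SingLocus (f : S) : Set (Projectivization ℂ (Fin 3 → ℂ)) :=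
  {P | IsSingAt f P.rep}

/-- The linear form with coefficient vector `v`. -/
def linForm (v : Fin 3 → ℂ) : S := ∑ i, C (v i) * X i

/-- `T(k)`: the coefficient of `t^k` in `((1-t^(d-1))/(1-t))³`, i.e. the Hilbert
function of the Milnor algebra of a smooth curve of degree `d`. -/
noncomputable def Tcoef (d k : ℕ) : ℚ :=
  PowerSeries.coeff k ((((1 : PowerSeries ℚ) - PowerSeries.X ^ (d-1)) * ((1 : PowerSeries ℚ) - PowerSeries.X)⁻¹) ^ 3)


/-- `B(n) = n(n-1)/2`, the binomial coefficient "n choose 2" as a polynomial in `n ∈ ℤ`. -/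
def binom2 (n : ℤ) : ℤ := n * (n - 1) / 2


/-! Let `p` be a point lying on `m(A)` of the lines. Those lines multiply to a cone
`g` with vertex `p`, killed by the directional derivative `D_p = ∑ pᵢ ∂ᵢ`. Writing `f = g h`,
where `h` is the product of the remaining `d - m(A)` lines, Leibniz gives `h D_p f = f D_p h`;
together with Euler's identity `∑ xᵢ ∂ᵢ f = d f` this makes `d p h - D_p(h) (x, y, z)` a nonzero
Jacobian syzygy of degree `d - m(A)`. -/

namespace MvPolynomial

section DirDeriv

variable {σ R : Type*} [CommRing R] [Fintype σ]

def dirDeriv (p : σ → R) : Derivation R (MvPolynomial σ R) (MvPolynomial σ R) :=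
  ∑ i, p i • pderiv i

theorem dirDeriv_apply (p : σ → R) (φ : MvPolynomial σ R) :
    dirDeriv p φ = ∑ i, C (p i) * pderiv i φ := by
  rw [dirDeriv, ← Derivation.coeFnAddMonoidHom_apply, map_sum, Finset.sum_apply]
  simp [smul_eq_C_mul]

theorem dirDeriv_prod_eq_zero {ι : Type*} (p : σ → R) (s : Finset ι) (F : ι → MvPolynomial σ R)
    (hF : ∀ j ∈ s, dirDeriv p (F j) = 0) : dirDeriv p (∏ j ∈ s, F j) = 0 :=
  Finset.prod_induction F (fun φ => dirDeriv p φ = 0)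
    (fun a b ha hb => by simp [Derivation.leibniz, ha, hb]) (Derivation.map_one_eq_zero _) hF

theorem IsHomogeneous.dirDeriv {φ : MvPolynomial σ R} {n : ℕ} (hφ : φ.IsHomogeneous n)
    (p : σ → R) : (MvPolynomial.dirDeriv p φ).IsHomogeneous (n - 1) := by
  rw [dirDeriv_apply]
  exact IsHomogeneous.sum _ _ _ fun i _ => hφ.pderiv.C_mul _

theorem IsHomogeneous.dirDeriv_mul_X {φ : MvPolynomial σ R} {n : ℕ} (hφ : φ.IsHomogeneous n)
    (p : σ → R) (i : σ) : (MvPolynomial.dirDeriv p φ * X i).IsHomogeneous n := by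
  rcases n with _ | n
  · by_cases hφ0 : φ = 0
    · simp [hφ0, isHomogeneous_zero]
    rw [totalDegree_eq_zero_iff_eq_C.mp (hφ.totalDegree hφ0), dirDeriv_apply]
    simp [isHomogeneous_zero]
  · simpa using (hφ.dirDeriv p).mul (isHomogeneous_X R i)

end DirDeriv

theorem C_mul_sub_mul_X_ne_zero {σ K : Type*} [Field K] [Nontrivial σ] {p : σ → K}
    (hp : p ≠ 0) {c : K} (hc : c ≠ 0) {h : MvPolynomial σ K} (hh : h ≠ 0)
    (q : MvPolynomial σ K) : (fun i => C (c * p i) * h - q * X i) ≠ 0 := by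
  classical
  intro h0
  have hcomp (i : σ) : C c * C (p i) * h = q * X i := by
    rw [← C_mul]; exact sub_eq_zero.mp (congrFun h0 i)
  obtain ⟨i, hi⟩ := Function.ne_iff.mp hp
  obtain ⟨j, hij⟩ := exists_ne i
  have hlin : C (p j) * X i - C (p i) * X j ≠ (0 : MvPolynomial σ K) := fun hz =>
    hi (by simpa [Pi.single_apply, hij] using congrArg (eval (Pi.single j 1)) hz)
  have hq : q = 0 := by
    refine (mul_eq_zero.mp ?_).resolve_right hlin
    linear_combination C (p i) * hcomp j - C (p j) * hcomp i
  exact hi (by simpa [hq, hc, hh] using hcomp i)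

end MvPolynomial

theorem jacMap_apply (f : S) (a : Fin 3 → S) : jacMap f a = ∑ i, a i * pderiv i f := by
  simp [jacMap, Fintype.linearCombination_apply]

theorem mdr_le_of_eq_mul_of_dirDeriv_eq_zero {f g h : S} {d e : ℕ} {p : Fin 3 → ℂ} (hp : p ≠ 0) (hd : d ≠ 0)
    (hf : f.IsHomogeneous d) (hfgh : f = g * h) (hg : dirDeriv p g = 0)
    (hh : h.IsHomogeneous e) (hh0 : h ≠ 0) : mdr f ≤ e := by
  set a : Fin 3 → S := fun i => C ((d : ℂ) * p i) * h - dirDeriv p h * X i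
  have hDf : dirDeriv p f = g * dirDeriv p h := by
    simp [hfgh, Derivation.leibniz, hg]
  have hsyz : jacMap f a = 0 := by
    have : jacMap f a =
        C (d : ℂ) * (h * dirDeriv p f) - dirDeriv p h * ∑ i, X i * pderiv i f := by
      simp only [jacMap_apply, dirDeriv_apply, a, Finset.mul_sum, ← Finset.sum_sub_distrib, C_mul]
      exact Finset.sum_congr rfl fun i _ => by ring
    rw [this, hf.sum_X_mul_pderiv, hDf, hfgh, nsmul_eq_mul, map_natCast]
    ring
  refine Nat.sInf_le ⟨a, hsyz, ?_, fun i => ?_⟩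
  · exact C_mul_sub_mul_X_ne_zero hp (Nat.cast_ne_zero.mpr hd) hh0 _
  · exact (hh.C_mul _).sub (hh.dirDeriv_mul_X p i)

theorem dirDeriv_linForm (p w : Fin 3 → ℂ) : dirDeriv p (linForm w) = C (∑ i, w i * p i) := by
  simp [dirDeriv_apply, linForm, pderiv_X, Pi.single_apply, mul_comm]

theorem linForm_isHomogeneous (w : Fin 3 → ℂ) : (linForm w).IsHomogeneous 1 :=
  IsHomogeneous.sum _ _ 1 fun i _ => (isHomogeneous_X ℂ i).C_mul _

theorem prod_linForm_isHomogeneous {ι : Type*} (s : Finset ι) (v : ι → Fin 3 → ℂ) :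
    (∏ j ∈ s, linForm (v j)).IsHomogeneous s.card := by
  simpa using IsHomogeneous.prod s (fun j => linForm (v j)) (fun _ => 1)
    fun j _ => linForm_isHomogeneous (v j)

theorem linForm_ne_zero {w : Fin 3 → ℂ} (hw : w ≠ 0) : linForm w ≠ 0 := by
  obtain ⟨i, hi⟩ := Function.ne_iff.mp hw
  intro hz
  exact hi (by simpa [linForm, Pi.single_apply] using congrArg (eval (Pi.single i 1)) hz)

theorem mdr_prod_linForm_le {ι : Type*} [Fintype ι] [Nonempty ι] (v : ι → Fin 3 → ℂ)
    (hv0 : ∀ j, v j ≠ 0) {p : Fin 3 → ℂ} (hp : p ≠ 0) :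
    mdr (∏ j, linForm (v j)) ≤ Fintype.card ι - {j | ∑ i, v j i * p i = 0}.ncard := by
  classical
  set T := Finset.univ.filter fun j => ∑ i, v j i * p i = 0
  rw [Set.ncard_eq_toFinset_card', Set.toFinset_ofPred, ← Finset.card_compl]
  refine mdr_le_of_eq_mul_of_dirDeriv_eq_zero hp (Fintype.card_ne_zero (α := ι)) ?_
    (Finset.prod_mul_prod_compl T _).symm ?_ (prod_linForm_isHomogeneous _ v) ?_
  · simpa using prod_linForm_isHomogeneous Finset.univ v
  · refine dirDeriv_prod_eq_zero p T _ fun j hj => ?_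
    rw [dirDeriv_linForm, (Finset.mem_filter.mp hj).2, C_0]
  · exact Finset.prod_ne_zero_iff.mpr fun j _ => linForm_ne_zero (hv0 j)

theorem stmt13_general (d mA : ℕ) (hd : 2 ≤ d) (v : Fin d → (Fin 3 → ℂ))
    (hv0 : ∀ j, v j ≠ 0)
    (hmA2 : 2 ≤ mA)
    (hex : ∃ p : Fin 3 → ℂ, p ≠ 0 ∧ {j : Fin d | ∑ i, v j i * p i = 0}.ncard = mA)
    (f : S) (hf : f = ∏ j, linForm (v j)) :
    mdr f ≤ d - mA ∧ d - mA ≤ d - 2 ∧ mdr f ≠ d - 1 := by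
  obtain ⟨p, hp, hcard⟩ := hex
  have : NeZero d := ⟨by omega⟩
  have hmdr : mdr f ≤ d - mA := by
    simpa [hf, hcard] using mdr_prod_linForm_le v hv0 hp
  omega

/-- Remark after Proposition 5: for an arrangement of `d > 1` lines, not
all through one point, with maximal multiplicity `mA ≥ 2` of a point, one has
`mdr(f) ≤ d - mA ≤ d - 2`; in particular no line arrangement is a maximal Tjurina curve of
type `(d, d-1)` (its `mdr` is never `d-1`). -/
theorem stmt13 (d mA : ℕ) (hd : 2 ≤ d) (v : Fin d → (Fin 3 → ℂ))
    (hv0 : ∀ j, v j ≠ 0)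
    (hdist : ∀ j k, j ≠ k → ∀ c : ℂ, v j ≠ c • v k)
    (hnotall : ¬∃ p : Fin 3 → ℂ, p ≠ 0 ∧ ∀ j, ∑ i, v j i * p i = 0)
    (hmA2 : 2 ≤ mA)
    (hmax : ∀ p : Fin 3 → ℂ, p ≠ 0 → {j : Fin d | ∑ i, v j i * p i = 0}.ncard ≤ mA)
    (hex : ∃ p : Fin 3 → ℂ, p ≠ 0 ∧ {j : Fin d | ∑ i, v j i * p i = 0}.ncard = mA)
    (f : S) (hf : f = ∏ j, linForm (v j)) :
    mdr f ≤ d - mA ∧ d - mA ≤ d - 2 ∧ mdr f ≠ d - 1 :=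
  stmt13_general d mA hd v hv0 hmA2 hex f hf

end
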